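/- arXiv:2605.30006 — 6 statements merged into one kernel-verified Lean document; each statement's English description precedes it below -/
import Mathlib

section
/- Let Ĝ := Ĝ_0 and let I_{dA} ⊆ Ĝ be the linear span of the elements i l Φ_{kl} + i k Θ_{kl} for (k,l) ∈ ℤ². Then I_{dA} is contained in the center of Ĝ (in particular it is a Lie ideal), and the quotient Lie algebra Ĝ / I_{dA} is isomorphic, as a complex Lie algebra, to 𝒜 ⊕ ℂ³, where ℂ³ denotes the 3-dimensional abelian complex Lie algebra. -/
/-- Index type for the basis of the free corner algebra of 4d abelian BF theory on the torus. -/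
inductive GhatIdx : Type
  | E : ℤ → ℤ → GhatIdx
  | Phi : ℤ → ℤ → GhatIdx
  | Theta : ℤ → ℤ → GhatIdx
  | Z : GhatIdx

/-- `IsAbelianBFCorner Λ G b` says that the complex Lie algebra `G`, with basis `b` indexed by
`GhatIdx`, satisfies the bracket relations of the free corner algebra `Ĝ_Λ` of four-dimensional
abelian BF theory on the torus:
`[E_{kl}, Φ_{mn}] = i m δ_{k,-m} δ_{l,-n} Z`, `[E_{kl}, Θ_{mn}] = -i n δ_{k,-m} δ_{l,-n} Z`,
`[Φ_{kl}, Θ_{mn}] = Λ δ_{k,-m} δ_{l,-n} Z`, all other brackets of basis elements zero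
(`Z` central). -/
structure IsAbelianBFCorner (Λ : ℝ) (G : Type) [LieRing G] [LieAlgebra ℂ G]
    (b : Module.Basis GhatIdx ℂ G) : Prop where
  E_Phi : ∀ k l m n : ℤ, ⁅b (GhatIdx.E k l), b (GhatIdx.Phi m n)⁆ =
      if k = -m ∧ l = -n then (Complex.I * (m : ℂ)) • b GhatIdx.Z else 0
  E_Theta : ∀ k l m n : ℤ, ⁅b (GhatIdx.E k l), b (GhatIdx.Theta m n)⁆ =
      if k = -m ∧ l = -n then (-(Complex.I * (n : ℂ))) • b GhatIdx.Z else 0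
  Phi_Theta : ∀ k l m n : ℤ, ⁅b (GhatIdx.Phi k l), b (GhatIdx.Theta m n)⁆ =
      if k = -m ∧ l = -n then (Λ : ℂ) • b GhatIdx.Z else 0
  E_E : ∀ k l m n : ℤ, ⁅b (GhatIdx.E k l), b (GhatIdx.E m n)⁆ = 0
  Phi_Phi : ∀ k l m n : ℤ, ⁅b (GhatIdx.Phi k l), b (GhatIdx.Phi m n)⁆ = 0
  Theta_Theta : ∀ k l m n : ℤ, ⁅b (GhatIdx.Theta k l), b (GhatIdx.Theta m n)⁆ = 0
  Z_central : ∀ i : GhatIdx, ⁅b GhatIdx.Z, b i⁆ = 0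
/-- Index type for the basis of the oscillator (Heisenberg) algebra. -/
inductive OscIdx : Type
  | a : ℤ → OscIdx
  | adag : ℤ → OscIdx
  | Z : OscIdx

/-- `IsOscillator A b` says that the complex Lie algebra `A`, with basis `b` indexed by `OscIdx`,
satisfies the bracket relations of the oscillator (Heisenberg) algebra:
`[a_m, a_n†] = δ_{m,n} Z`, all other brackets of basis elements zero (`Z` central). -/
structure IsOscillator (A : Type) [LieRing A] [LieAlgebra ℂ A]
    (b : Module.Basis OscIdx ℂ A) : Prop where
  a_adag : ∀ m n : ℤ, ⁅b (OscIdx.a m), b (OscIdx.adag n)⁆ =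
      if m = n then b OscIdx.Z else 0
  a_a : ∀ m n : ℤ, ⁅b (OscIdx.a m), b (OscIdx.a n)⁆ = 0
  adag_adag : ∀ m n : ℤ, ⁅b (OscIdx.adag m), b (OscIdx.adag n)⁆ = 0
  Z_central : ∀ i : OscIdx, ⁅b OscIdx.Z, b i⁆ = 0
/-- `IsOscillatorPlusAbelian ι D b` says that the complex Lie algebra `D`, with basis `b` indexed
by `OscIdx ⊕ ι`, is presented as the direct sum `𝒜 ⊕ 𝔞` of the oscillator (Heisenberg) algebra 𝒜
(on the `Sum.inl` part of the basis) and the abelian Lie algebra 𝔞 with basis indexed by `ι`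
(on the `Sum.inr` part of the basis, whose members are central and bracket to zero). -/
structure IsOscillatorPlusAbelian (ι : Type) (D : Type) [LieRing D] [LieAlgebra ℂ D]
    (b : Module.Basis (OscIdx ⊕ ι) ℂ D) : Prop where
  a_adag : ∀ m n : ℤ, ⁅b (Sum.inl (OscIdx.a m)), b (Sum.inl (OscIdx.adag n))⁆ =
      if m = n then b (Sum.inl OscIdx.Z) else 0
  a_a : ∀ m n : ℤ, ⁅b (Sum.inl (OscIdx.a m)), b (Sum.inl (OscIdx.a n))⁆ = 0
  adag_adag : ∀ m n : ℤ, ⁅b (Sum.inl (OscIdx.adag m)), b (Sum.inl (OscIdx.adag n))⁆ = 0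
  Z_central : ∀ i : OscIdx ⊕ ι, ⁅b (Sum.inl OscIdx.Z), b i⁆ = 0
  ab_central : ∀ (x : ι) (i : OscIdx ⊕ ι), ⁅b (Sum.inr x), b i⁆ = 0

/-- The set of generators of the constraint ideal `I_{dA}` of abelian BF theory without
cosmological term: the elements `i l Φ_{kl} + i k Θ_{kl}` for `(k,l) ∈ ℤ²`. -/
def constraintSet (G : Type) [LieRing G] [LieAlgebra ℂ G] (b : Module.Basis GhatIdx ℂ G) : Set G :=
  {x : G | ∃ k l : ℤ,
    x = (Complex.I * (l : ℂ)) • b (GhatIdx.Phi k l) + (Complex.I * (k : ℂ)) • b (GhatIdx.Theta k l)}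

namespace BFAux

open GhatIdx OscIdx Complex

noncomputable section

abbrev NZ : Type := {p : ℤ × ℤ // p ≠ (0,0)}

instance : Infinite NZ :=
  Infinite.of_injective (fun n : ℕ => ⟨((n:ℤ)+1, 0), by simp [Prod.ext_iff]; omega⟩)
    (fun a c h => by simpa [Subtype.ext_iff, Prod.ext_iff] using h)

instance : Denumerable NZ := Denumerable.ofEncodableOfInfinite NZ

def sig : NZ ≃ ℤ := (Denumerable.eqv NZ).trans (Denumerable.eqv ℤ).symm

lemma negne {k l : ℤ} (h : ¬ ((k,l) : ℤ×ℤ) = (0,0)) : ((-k,-l) : ℤ×ℤ) ≠ (0,0) := by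
  simp only [ne_eq, Prod.mk.injEq, neg_eq_zero] at *; tauto

lemma sig_eq_iff {p q : ℤ×ℤ} (hp : p ≠ (0,0)) (hq : q ≠ (0,0)) :
    sig ⟨p,hp⟩ = sig ⟨q,hq⟩ ↔ p = q := by
  rw [Equiv.apply_eq_iff_eq, Subtype.mk.injEq]

lemma central_of_basis {M : Type*} [LieRing M] [LieAlgebra ℂ M] {ι : Type*}
    (bb : Module.Basis ι ℂ M) {x : M} (h : ∀ i, ⁅x, bb i⁆ = 0) : ∀ y : M, ⁅x, y⁆ = 0 := by
  have hx : LieAlgebra.ad ℂ M x = 0 := bb.ext fun i => by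
    simpa [LieAlgebra.ad_apply] using h i
  intro y
  have := congrFun (congrArg DFunLike.coe hx) y
  simpa [LieAlgebra.ad_apply] using this

lemma central_right {M : Type*} [LieRing M] [LieAlgebra ℂ M] {x : M}
    (h : ∀ y : M, ⁅x, y⁆ = 0) : ∀ y : M, ⁅y, x⁆ = 0 := by
  intro y; rw [← lie_skew, h, neg_zero]

lemma lie_swap {L : Type*} [LieRing L] (x y : L) : ⁅x, y⁆ = -⁅y, x⁆ :=
  (neg_eq_iff_eq_neg.mp (lie_skew y x))

section Main

variable {G : Type} [LieRing G] [LieAlgebra ℂ G] (b : Module.Basis GhatIdx ℂ G)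
variable {D : Type} [LieRing D] [LieAlgebra ℂ D] (bD : Module.Basis (OscIdx ⊕ Fin 3) ℂ D)

/-- image of the `GhatIdx`-indexed basis in `D`. -/
def vmap : GhatIdx → D
  | .E k l => if h : ((k,l) : ℤ×ℤ) = (0,0) then bD (.inr 0) else bD (.inl (.a (sig ⟨(k,l), h⟩)))
  | .Phi k l => if h : ((k,l) : ℤ×ℤ) = (0,0) then bD (.inr 1)
      else (Complex.I * (k:ℂ)) • bD (.inl (.adag (sig ⟨(-k,-l), negne h⟩)))
  | .Theta k l => if h : ((k,l) : ℤ×ℤ) = (0,0) then bD (.inr 2)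
      else (-(Complex.I * (l:ℂ))) • bD (.inl (.adag (sig ⟨(-k,-l), negne h⟩)))
  | .Z => bD (.inl .Z)

def fmap : G →ₗ[ℂ] D := b.constr ℂ (vmap bD)

@[simp] lemma fmap_basis (i : GhatIdx) : fmap b bD (b i) = vmap bD i :=
  Module.Basis.constr_basis b ℂ (vmap bD) i

/-- the constraint elements -/
def cel (k l : ℤ) : G :=
  (Complex.I * (l : ℂ)) • b (GhatIdx.Phi k l) + (Complex.I * (k : ℂ)) • b (GhatIdx.Theta k l)

lemma cel_mem (k l : ℤ) : cel b k l ∈ constraintSet G b := ⟨k, l, rfl⟩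

variable {b} {bD}

lemma cel_central (hG : IsAbelianBFCorner 0 G b) (k l : ℤ) :
    ∀ y : G, ⁅cel b k l, y⁆ = 0 := by
  apply central_of_basis b
  intro j
  rcases j with ⟨m,n⟩|⟨m,n⟩|⟨m,n⟩|_ <;>
    simp only [cel, add_lie, smul_lie]
  · rw [lie_swap (b (GhatIdx.Phi k l)), lie_swap (b (GhatIdx.Theta k l)),
      hG.E_Phi, hG.E_Theta]
    split_ifs with h
    · match_scalars; ring
    · simp
  · rw [hG.Phi_Phi, lie_swap (b (GhatIdx.Theta k l)), hG.Phi_Theta]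
    split_ifs <;> simp
  · rw [hG.Phi_Theta, hG.Theta_Theta]
    split_ifs <;> simp
  · rw [lie_swap (b (GhatIdx.Phi k l)), lie_swap (b (GhatIdx.Theta k l)),
      hG.Z_central, hG.Z_central]
    simp

lemma span_central (hG : IsAbelianBFCorner 0 G b) :
    ∀ x ∈ Submodule.span ℂ (constraintSet G b), ∀ y : G, ⁅x, y⁆ = 0 := by
  intro x hx
  induction hx using Submodule.span_induction with
  | mem x h => obtain ⟨k, l, rfl⟩ := h; exact cel_central hG k l
  | zero => intro y; simp
  | add x y _ _ hx hy => intro z; rw [add_lie, hx z, hy z, add_zero]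
  | smul c x _ hx => intro z; rw [smul_lie, hx z, smul_zero]

lemma lieSpan_toSubmodule (hG : IsAbelianBFCorner 0 G b) :
    (LieSubmodule.lieSpan ℂ G (constraintSet G b)).toSubmodule
      = Submodule.span ℂ (constraintSet G b) := by
  apply le_antisymm
  · have : LieSubmodule.lieSpan ℂ G (constraintSet G b) ≤
        { toSubmodule := Submodule.span ℂ (constraintSet G b)
          lie_mem := fun {x m} hm => by
            rw [lie_swap, span_central hG m hm x, neg_zero]
            exact Submodule.zero_mem _ } :=
      LieSubmodule.lieSpan_le.mpr Submodule.subset_span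
    exact this
  · rw [Submodule.span_le]
    exact LieSubmodule.subset_lieSpan

end Main

end

end BFAux

namespace BFAux
noncomputable section
open GhatIdx OscIdx Complex
section Main2
variable {G : Type} [LieRing G] [LieAlgebra ℂ G] {b : Module.Basis GhatIdx ℂ G}
variable {D : Type} [LieRing D] [LieAlgebra ℂ D] {bD : Module.Basis (OscIdx ⊕ Fin 3) ℂ D}

lemma ZD_left (hD : IsOscillatorPlusAbelian (Fin 3) D bD) (y : D) : ⁅bD (.inl OscIdx.Z), y⁆ = 0 :=
  central_of_basis bD hD.Z_central y

lemma abD_left (hD : IsOscillatorPlusAbelian (Fin 3) D bD) (t : Fin 3) (y : D) : ⁅bD (.inr t), y⁆ = 0 :=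
  central_of_basis bD (hD.ab_central t) y

lemma ZD_right (hD : IsOscillatorPlusAbelian (Fin 3) D bD) (y : D) : ⁅y, bD (.inl OscIdx.Z)⁆ = 0 :=
  central_right (ZD_left hD) y

lemma abD_right (hD : IsOscillatorPlusAbelian (Fin 3) D bD) (t : Fin 3) (y : D) : ⁅y, bD (.inr t)⁆ = 0 :=
  central_right (abD_left hD t) y

lemma keyswap {i j : GhatIdx}
    (h : fmap b bD ⁅b i, b j⁆ = ⁅vmap bD i, vmap bD j⁆) :
    fmap b bD ⁅b j, b i⁆ = ⁅vmap bD j, vmap bD i⁆ := by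
  rw [lie_swap (b j), map_neg, h]
  exact lie_skew _ _

lemma keyZ (hG : IsAbelianBFCorner 0 G b) (hD : IsOscillatorPlusAbelian (Fin 3) D bD) (j : GhatIdx) :
    fmap b bD ⁅b GhatIdx.Z, b j⁆ = ⁅vmap bD GhatIdx.Z, vmap bD j⁆ := by
  rw [hG.Z_central, map_zero, show vmap bD GhatIdx.Z = bD (.inl OscIdx.Z) from rfl,
    ZD_left hD]

lemma keyEE (hG : IsAbelianBFCorner 0 G b) (hD : IsOscillatorPlusAbelian (Fin 3) D bD) (k l m n : ℤ) :
    fmap b bD ⁅b (GhatIdx.E k l), b (GhatIdx.E m n)⁆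
      = ⁅vmap bD (GhatIdx.E k l), vmap bD (GhatIdx.E m n)⁆ := by
  rw [hG.E_E, map_zero]
  simp only [vmap]
  split_ifs <;>
    simp [hD.a_a, abD_left hD, abD_right hD]

lemma keyPP (hG : IsAbelianBFCorner 0 G b) (hD : IsOscillatorPlusAbelian (Fin 3) D bD) (k l m n : ℤ) :
    fmap b bD ⁅b (GhatIdx.Phi k l), b (GhatIdx.Phi m n)⁆
      = ⁅vmap bD (GhatIdx.Phi k l), vmap bD (GhatIdx.Phi m n)⁆ := by
  rw [hG.Phi_Phi, map_zero]
  simp only [vmap]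
  split_ifs <;>
    simp [hD.adag_adag, abD_left hD, abD_right hD]

lemma keyTT (hG : IsAbelianBFCorner 0 G b) (hD : IsOscillatorPlusAbelian (Fin 3) D bD) (k l m n : ℤ) :
    fmap b bD ⁅b (GhatIdx.Theta k l), b (GhatIdx.Theta m n)⁆
      = ⁅vmap bD (GhatIdx.Theta k l), vmap bD (GhatIdx.Theta m n)⁆ := by
  rw [hG.Theta_Theta, map_zero]
  simp only [vmap]
  split_ifs <;>
    simp [hD.adag_adag, abD_left hD, abD_right hD]

lemma keyPT (hG : IsAbelianBFCorner 0 G b) (hD : IsOscillatorPlusAbelian (Fin 3) D bD) (k l m n : ℤ) :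
    fmap b bD ⁅b (GhatIdx.Phi k l), b (GhatIdx.Theta m n)⁆
      = ⁅vmap bD (GhatIdx.Phi k l), vmap bD (GhatIdx.Theta m n)⁆ := by
  rw [hG.Phi_Theta]
  simp only [Complex.ofReal_zero, zero_smul, ite_self, map_zero]
  simp only [vmap]
  split_ifs <;>
    simp [hD.adag_adag, abD_left hD, abD_right hD]

lemma keyEP (hG : IsAbelianBFCorner 0 G b) (hD : IsOscillatorPlusAbelian (Fin 3) D bD) (k l m n : ℤ) :
    fmap b bD ⁅b (GhatIdx.E k l), b (GhatIdx.Phi m n)⁆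
      = ⁅vmap bD (GhatIdx.E k l), vmap bD (GhatIdx.Phi m n)⁆ := by
  rw [hG.E_Phi, apply_ite (fmap b bD), map_smul, map_zero, fmap_basis]
  simp only [vmap]
  by_cases h1 : ((k,l) : ℤ×ℤ) = (0,0) <;> by_cases h2 : ((m,n) : ℤ×ℤ) = (0,0)
  · rw [dif_pos h1, dif_pos h2]
    obtain ⟨hk, hl⟩ := Prod.mk.injEq .. ▸ h1
    obtain ⟨hm, hn⟩ := Prod.mk.injEq .. ▸ h2
    subst hk hl hm hn
    simp [abD_left hD]
  · rw [dif_pos h1, dif_neg h2]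
    obtain ⟨hk, hl⟩ := Prod.mk.injEq .. ▸ h1
    subst hk hl
    rw [if_neg (fun hc => h2 (by simp only [Prod.mk.injEq]; omega))]
    simp [abD_left hD]
  · rw [dif_neg h1, dif_pos h2]
    obtain ⟨hm, hn⟩ := Prod.mk.injEq .. ▸ h2
    subst hm hn
    rw [if_neg (by rintro ⟨rfl, rfl⟩; simp at h1)]
    simp [abD_right hD]
  · rw [dif_neg h1, dif_neg h2, lie_smul, hD.a_adag, smul_ite, smul_zero]
    by_cases h3 : k = -m ∧ l = -n
    · rw [if_pos h3, if_pos (by rw [sig_eq_iff]; exact Prod.ext h3.1 h3.2)]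
    · rw [if_neg h3, if_neg ?_]
      intro hc
      rw [sig_eq_iff] at hc
      exact h3 ⟨congrArg Prod.fst hc, congrArg Prod.snd hc⟩

lemma keyET (hG : IsAbelianBFCorner 0 G b) (hD : IsOscillatorPlusAbelian (Fin 3) D bD) (k l m n : ℤ) :
    fmap b bD ⁅b (GhatIdx.E k l), b (GhatIdx.Theta m n)⁆
      = ⁅vmap bD (GhatIdx.E k l), vmap bD (GhatIdx.Theta m n)⁆ := by
  rw [hG.E_Theta, apply_ite (fmap b bD), map_smul, map_zero, fmap_basis]
  simp only [vmap]
  by_cases h1 : ((k,l) : ℤ×ℤ) = (0,0) <;> by_cases h2 : ((m,n) : ℤ×ℤ) = (0,0)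
  · rw [dif_pos h1, dif_pos h2]
    obtain ⟨hk, hl⟩ := Prod.mk.injEq .. ▸ h1
    obtain ⟨hm, hn⟩ := Prod.mk.injEq .. ▸ h2
    subst hk hl hm hn
    simp [abD_left hD]
  · rw [dif_pos h1, dif_neg h2]
    obtain ⟨hk, hl⟩ := Prod.mk.injEq .. ▸ h1
    subst hk hl
    rw [if_neg (fun hc => h2 (by simp only [Prod.mk.injEq]; omega))]
    simp [abD_left hD]
  · rw [dif_neg h1, dif_pos h2]
    obtain ⟨hm, hn⟩ := Prod.mk.injEq .. ▸ h2
    subst hm hn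
    rw [if_neg (by rintro ⟨rfl, rfl⟩; simp at h1)]
    simp [abD_right hD]
  · rw [dif_neg h1, dif_neg h2, lie_smul, hD.a_adag, smul_ite, smul_zero]
    by_cases h3 : k = -m ∧ l = -n
    · rw [if_pos h3, if_pos (by rw [sig_eq_iff]; exact Prod.ext h3.1 h3.2)]
    · rw [if_neg h3, if_neg ?_]
      intro hc
      rw [sig_eq_iff] at hc
      exact h3 ⟨congrArg Prod.fst hc, congrArg Prod.snd hc⟩

lemma key (hG : IsAbelianBFCorner 0 G b) (hD : IsOscillatorPlusAbelian (Fin 3) D bD) (i j : GhatIdx) :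
    fmap b bD ⁅b i, b j⁆ = ⁅vmap bD i, vmap bD j⁆ := by
  rcases i with ⟨k,l⟩|⟨k,l⟩|⟨k,l⟩|_ <;> rcases j with ⟨m,n⟩|⟨m,n⟩|⟨m,n⟩|_
  · exact keyEE hG hD k l m n
  · exact keyEP hG hD k l m n
  · exact keyET hG hD k l m n
  · exact keyswap (keyZ hG hD _)
  · exact keyswap (keyEP hG hD m n k l)
  · exact keyPP hG hD k l m n
  · exact keyPT hG hD k l m n
  · exact keyswap (keyZ hG hD _)
  · exact keyswap (keyET hG hD m n k l)
  · exact keyswap (keyPT hG hD m n k l)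
  · exact keyTT hG hD k l m n
  · exact keyswap (keyZ hG hD _)
  · exact keyZ hG hD _
  · exact keyZ hG hD _
  · exact keyZ hG hD _
  · exact keyZ hG hD _

attribute [local instance] LieRing.ofAssociativeRing LieAlgebra.ofAssociativeAlgebra

lemma fmap_lie (hG : IsAbelianBFCorner 0 G b) (hD : IsOscillatorPlusAbelian (Fin 3) D bD) : ∀ x y : G, fmap b bD ⁅x, y⁆ = ⁅fmap b bD x, fmap b bD y⁆ := by
  have hbil :
      LinearMap.compr₂ (LieAlgebra.ad ℂ G).toLinearMap (fmap b bD)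
        = LinearMap.compl₂ ((LieAlgebra.ad ℂ D).toLinearMap ∘ₗ fmap b bD) (fmap b bD) := by
    apply b.ext; intro i; apply b.ext; intro j
    simpa [LinearMap.compr₂_apply, LinearMap.compl₂_apply, LieAlgebra.ad_apply]
      using key hG hD i j
  intro x y
  have h := LinearMap.congr_fun (LinearMap.congr_fun hbil x) y
  simpa [LinearMap.compr₂_apply, LinearMap.compl₂_apply, LieAlgebra.ad_apply] using h

end Main2
end
end BFAux

namespace BFAux
noncomputable section
open GhatIdx OscIdx Complex
section Main3
variable {G : Type} [LieRing G] [LieAlgebra ℂ G] (b : Module.Basis GhatIdx ℂ G)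
variable {D : Type} [LieRing D] [LieAlgebra ℂ D] (bD : Module.Basis (OscIdx ⊕ Fin 3) ℂ D)

def SS (p : NZ) : ℂ := ((p.1.1 ^ 2 + p.1.2 ^ 2 : ℤ) : ℂ)

lemma SS_ne (p : NZ) : SS p ≠ 0 := by
  obtain ⟨⟨k, l⟩, hp⟩ := p
  simp only [SS, ne_eq, Int.cast_eq_zero]
  intro h0
  have hk : k ^ 2 = 0 := by nlinarith [sq_nonneg k, sq_nonneg l]
  have hl : l ^ 2 = 0 := by nlinarith [sq_nonneg k, sq_nonneg l]
  exact hp (by simp [pow_eq_zero_iff] at hk hl; simp [Prod.ext_iff, hk, hl])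

def uu (p : NZ) : G :=
  (Complex.I * (p.1.1 : ℂ) / SS p) • b (GhatIdx.Phi (-p.1.1) (-p.1.2))
    + (-(Complex.I * (p.1.2 : ℂ)) / SS p) • b (GhatIdx.Theta (-p.1.1) (-p.1.2))

lemma fmap_uu (p : NZ) : fmap b bD (uu b p) = bD (.inl (.adag (sig p))) := by
  obtain ⟨⟨k, l⟩, hp⟩ := p
  have hS : SS ⟨(k, l), hp⟩ ≠ 0 := SS_ne _
  simp only [uu, map_add, map_smul, fmap_basis, vmap]
  rw [dif_neg (negne hp), dif_neg (negne hp)]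
  have he : (⟨(-(-k), -(-l)), negne (negne hp)⟩ : NZ) = ⟨(k, l), hp⟩ :=
    Subtype.ext (by simp)
  rw [he]
  rw [smul_smul, smul_smul, ← add_smul]
  rw [show Complex.I * (k : ℂ) / SS ⟨(k,l),hp⟩ * (Complex.I * ((-k : ℤ) : ℂ))
      + -(Complex.I * (l : ℂ)) / SS ⟨(k,l),hp⟩ * (-(Complex.I * ((-l : ℤ) : ℂ))) = 1 from ?_,
    one_smul]
  simp only [SS] at hS ⊢
  push_cast at hS ⊢
  field_simp
  linear_combination (-(k:ℂ)^2 - (l:ℂ)^2) * Complex.I_sq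

def wpre : OscIdx ⊕ Fin 3 → G
  | .inl (.a t) => b (GhatIdx.E (sig.symm t).1.1 (sig.symm t).1.2)
  | .inl (.adag t) => uu b (sig.symm t)
  | .inl .Z => b GhatIdx.Z
  | .inr t => b (![GhatIdx.E 0 0, GhatIdx.Phi 0 0, GhatIdx.Theta 0 0] t)

lemma fmap_wpre (j : OscIdx ⊕ Fin 3) : fmap b bD (wpre b j) = bD j := by
  rcases j with (t | t | _) | t
  · simp only [wpre, fmap_basis, vmap]
    rw [dif_neg (sig.symm t).2]
    have he : (⟨((sig.symm t).1.1, (sig.symm t).1.2), (sig.symm t).2⟩ : NZ) = sig.symm t := rfl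
    rw [he, Equiv.apply_symm_apply]
  · rw [wpre, fmap_uu, Equiv.apply_symm_apply]
  · simp only [wpre, fmap_basis]; rfl
  · fin_cases t <;> simp [wpre, vmap]

end Main3
end
end BFAux

namespace BFAux
noncomputable section
open GhatIdx OscIdx Complex
section Main4
variable {G : Type} [LieRing G] [LieAlgebra ℂ G] (b : Module.Basis GhatIdx ℂ G)
variable {D : Type} [LieRing D] [LieAlgebra ℂ D] (bD : Module.Basis (OscIdx ⊕ Fin 3) ℂ D)

def gmap : D →ₗ[ℂ] (G ⧸ (LieSubmodule.lieSpan ℂ G (constraintSet G b)).toSubmodule) :=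
  bD.constr ℂ fun j => Submodule.Quotient.mk (wpre b j)

@[simp] lemma gmap_basis (j : OscIdx ⊕ Fin 3) :
    gmap b bD (bD j) = Submodule.Quotient.mk (wpre b j) :=
  Module.Basis.constr_basis bD ℂ _ j

lemma fmap_cel (k l : ℤ) : fmap b bD (cel b k l) = 0 := by
  simp only [cel, map_add, map_smul, fmap_basis]
  by_cases h : ((k,l) : ℤ×ℤ) = (0,0)
  · obtain ⟨hk, hl⟩ := Prod.mk.injEq .. ▸ h
    subst hk hl
    simp [vmap]
  · simp only [vmap]
    rw [dif_neg h, dif_neg h, smul_smul, smul_smul, ← add_smul,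
      show Complex.I * (l:ℂ) * (Complex.I * (k:ℂ))
        + Complex.I * (k:ℂ) * (-(Complex.I * (l:ℂ))) = 0 by ring, zero_smul]

variable {b bD}

lemma gmap_vmap (hG : IsAbelianBFCorner 0 G b) (i : GhatIdx) :
    gmap b bD (vmap bD i) = Submodule.Quotient.mk (b i) := by
  rcases i with ⟨k,l⟩|⟨k,l⟩|⟨k,l⟩|_
  · simp only [vmap]
    by_cases h : ((k,l) : ℤ×ℤ) = (0,0)
    · rw [dif_pos h]
      obtain ⟨hk, hl⟩ := Prod.mk.injEq .. ▸ h
      subst hk hl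
      simp [wpre]
    · rw [dif_neg h, gmap_basis]
      simp only [wpre, Equiv.symm_apply_apply]
  · simp only [vmap]
    by_cases h : ((k,l) : ℤ×ℤ) = (0,0)
    · rw [dif_pos h]
      obtain ⟨hk, hl⟩ := Prod.mk.injEq .. ▸ h
      subst hk hl
      simp [wpre]
    · rw [dif_neg h, map_smul, gmap_basis]
      simp only [wpre, Equiv.symm_apply_apply]
      rw [← Submodule.Quotient.mk_smul, Submodule.Quotient.eq, lieSpan_toSubmodule hG]
      have hS : SS ⟨(-k,-l), negne h⟩ ≠ 0 := SS_ne _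
      have hkey : (Complex.I * (k:ℂ)) • uu b ⟨(-k,-l), negne h⟩ - b (GhatIdx.Phi k l)
          = (Complex.I * (l:ℂ) / SS ⟨(-k,-l), negne h⟩) • cel b k l := by
        simp only [uu, cel, SS, neg_neg] at hS ⊢
        push_cast at hS ⊢
        simp only [neg_sq] at hS
        match_scalars
        · field_simp
          linear_combination (-(k:ℂ)^2 - (l:ℂ)^2) * Complex.I_sq
        · field_simp
      rw [hkey]
      exact Submodule.smul_mem _ _ (Submodule.subset_span (cel_mem b k l))
  · simp only [vmap]
    by_cases h : ((k,l) : ℤ×ℤ) = (0,0)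
    · rw [dif_pos h]
      obtain ⟨hk, hl⟩ := Prod.mk.injEq .. ▸ h
      subst hk hl
      simp [wpre]
    · rw [dif_neg h, map_smul, gmap_basis]
      simp only [wpre, Equiv.symm_apply_apply]
      rw [← Submodule.Quotient.mk_smul, Submodule.Quotient.eq, lieSpan_toSubmodule hG]
      have hS : SS ⟨(-k,-l), negne h⟩ ≠ 0 := SS_ne _
      have hkey : (-(Complex.I * (l:ℂ))) • uu b ⟨(-k,-l), negne h⟩ - b (GhatIdx.Theta k l)
          = (Complex.I * (k:ℂ) / SS ⟨(-k,-l), negne h⟩) • cel b k l := by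
        simp only [uu, cel, SS, neg_neg] at hS ⊢
        push_cast at hS ⊢
        simp only [neg_sq] at hS
        match_scalars
        · field_simp
        · field_simp
          linear_combination (-(k:ℂ)^2 - (l:ℂ)^2) * Complex.I_sq
      rw [hkey]
      exact Submodule.smul_mem _ _ (Submodule.subset_span (cel_mem b k l))
  · simp [vmap, wpre]

end Main4
end
end BFAux

/-- For `Ĝ := Ĝ_0`, the span `I_{dA}` of the elements `i l Φ_{kl} + i k Θ_{kl}`
is contained in the center of `Ĝ` (so it is a Lie ideal), and the quotient Lie algebra
`Ĝ / I_{dA}` is isomorphic, as a complex Lie algebra, to `𝒜 ⊕ ℂ³` (presented here as the Lie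
algebra `D` with basis indexed by `OscIdx ⊕ Fin 3`). -/
theorem abelian_corner_algebra_physical_quotient (G : Type) [LieRing G] [LieAlgebra ℂ G]
    (b : Module.Basis GhatIdx ℂ G) (hG : IsAbelianBFCorner 0 G b)
    (D : Type) [LieRing D] [LieAlgebra ℂ D] (bD : Module.Basis (OscIdx ⊕ Fin 3) ℂ D)
    (hD : IsOscillatorPlusAbelian (Fin 3) D bD) :
    (∀ x ∈ Submodule.span ℂ (constraintSet G b), ∀ y : G, ⁅x, y⁆ = 0) ∧
    Nonempty ((G ⧸ LieSubmodule.lieSpan ℂ G (constraintSet G b)) ≃ₗ⁅ℂ⁆ D) := by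
  classical
  refine ⟨BFAux.span_central hG, ?_⟩
  have hle : (LieSubmodule.lieSpan ℂ G (constraintSet G b)).toSubmodule
      ≤ LinearMap.ker (BFAux.fmap b bD) := by
    rw [BFAux.lieSpan_toSubmodule hG, Submodule.span_le]
    rintro x ⟨k, l, rfl⟩
    exact BFAux.fmap_cel b bD k l
  let fbar : (G ⧸ LieSubmodule.lieSpan ℂ G (constraintSet G b)) →ₗ[ℂ] D :=
    Submodule.liftQ _ (BFAux.fmap b bD) hle
  let gmap : D →ₗ[ℂ] (G ⧸ LieSubmodule.lieSpan ℂ G (constraintSet G b)) :=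
    BFAux.gmap b bD
  have h1 : fbar.comp gmap = LinearMap.id := by
    apply bD.ext
    intro j
    show fbar (gmap (bD j)) = bD j
    exact (congrArg (⇑fbar) (BFAux.gmap_basis b bD j)).trans (BFAux.fmap_wpre b bD j)
  have h2 : gmap.comp fbar = LinearMap.id := by
    apply Submodule.linearMap_qext
    apply b.ext
    intro i
    show gmap (fbar (Submodule.Quotient.mk (b i))) = Submodule.Quotient.mk (b i)
    exact (congrArg (⇑gmap) (BFAux.fmap_basis b bD i)).trans (BFAux.gmap_vmap hG i)
  let e : (G ⧸ LieSubmodule.lieSpan ℂ G (constraintSet G b)) ≃ₗ[ℂ] D :=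
    LinearEquiv.ofLinear fbar gmap h1 h2
  refine ⟨⟨⟨e.toLinearMap, ?_⟩, e.invFun, e.left_inv, e.right_inv⟩⟩
  intro x y
  obtain ⟨a, rfl⟩ := Submodule.Quotient.mk_surjective _ x
  obtain ⟨c, rfl⟩ := Submodule.Quotient.mk_surjective _ y
  rw [← LieSubmodule.Quotient.mk_bracket]
  exact BFAux.fmap_lie hG hD a c
end

section
/- Let c ∈ ℂ be nonzero. Then the bosonic Fock space representation of the oscillator algebra 𝒜 with central charge c on the polynomial ring ℂ[X_m : m ∈ ℤ] is irreducible: every ℂ-linear subspace of ℂ[X_m : m ∈ ℤ] that is invariant under ρ(x) for all x ∈ 𝒜 is either {0} or the whole polynomial ring. -/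
attribute [local instance 100] LieRing.ofAssociativeRing

open MvPolynomial in
lemma my_coeff_pderiv (i : ℤ) (p : MvPolynomial ℤ ℂ) (m : ℤ →₀ ℕ) :
    coeff m (pderiv i p) = (m i + 1 : ℕ) * coeff (m + Finsupp.single i 1) p := by
  induction p using MvPolynomial.induction_on' with
  | monomial s a =>
    rw [pderiv_monomial, coeff_monomial, coeff_monomial]
    by_cases hs : s = m + Finsupp.single i 1
    · subst hs
      have h1 : m + Finsupp.single i 1 - Finsupp.single i 1 = m := by
        ext j; simp [Finsupp.single_apply]
      have h2 : ((m + Finsupp.single i 1 : ℤ →₀ ℕ)) i = m i + 1 := by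
        rw [Finsupp.add_apply, Finsupp.single_eq_same]
      rw [if_pos h1, if_pos rfl, h2]
      push_cast; ring
    · rw [if_neg hs]
      by_cases h1 : s - Finsupp.single i 1 = m
      · rw [if_pos h1]
        have hsi : s i = 0 := by
          by_contra h
          apply hs
          have hle : Finsupp.single i 1 ≤ s := by
            rw [Finsupp.single_le_iff]; omega
          rw [← h1, tsub_add_cancel_of_le hle]
        simp [hsi]
      · rw [if_neg h1]; ring
  | add p q hp hq =>
    simp only [map_add, coeff_add, hp, hq]; ring

open MvPolynomial in
lemma my_pderiv_totalDegree {p : MvPolynomial ℤ ℂ} {i : ℤ} {d : ℕ}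
    (h : p.totalDegree ≤ d + 1) : (pderiv i p).totalDegree ≤ d := by
  apply Finset.sup_le
  intro m hm
  rw [mem_support_iff, my_coeff_pderiv] at hm
  have hc : coeff (m + Finsupp.single i 1) p ≠ 0 := by
    intro h0; rw [h0, mul_zero] at hm; exact hm rfl
  have := le_totalDegree (p := p) (mem_support_iff.mpr hc)
  have hsum : ((m + Finsupp.single i 1).sum fun _ e => e) =
      (m.sum fun _ e => e) + 1 := by
    have h1 : ((Finsupp.single i 1 : ℤ →₀ ℕ).sum fun _ e => e) = 1 :=
      Finsupp.sum_single_index rfl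
    rw [Finsupp.sum_add_index' (fun _ => rfl) (fun _ _ _ => rfl), h1]
  omega

/-- For `c ≠ 0`, the bosonic Fock space representation of the oscillator
algebra `𝒜` with central charge `c` on the polynomial ring `ℂ[X_m : m ∈ ℤ]` is irreducible:
every `ℂ`-linear subspace invariant under `ρ(x)` for all `x ∈ 𝒜` is `{0}` or everything. -/
theorem oscillator_fock_representation_irreducible (c : ℂ) (hc : c ≠ 0)
    (A : Type) [LieRing A] [LieAlgebra ℂ A] (b : Module.Basis OscIdx ℂ A) (hA : IsOscillator A b)
    (ρ : A →ₗ⁅ℂ⁆ Module.End ℂ (MvPolynomial ℤ ℂ))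
    (hZ : ρ (b OscIdx.Z) = c • (1 : Module.End ℂ (MvPolynomial ℤ ℂ)))
    (hadag : ∀ m : ℤ, ρ (b (OscIdx.adag m)) = LinearMap.mulLeft ℂ (MvPolynomial.X m))
    (ha : ∀ m : ℤ, ρ (b (OscIdx.a m)) = c • (MvPolynomial.pderiv m).toLinearMap) :
    ∀ W : Submodule ℂ (MvPolynomial ℤ ℂ),
      (∀ x : A, ∀ q ∈ W, ρ x q ∈ W) → W = ⊥ ∨ W = ⊤ := by
  intro W hW
  by_cases hbot : W = ⊥
  · exact Or.inl hbot
  right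
  -- W is closed under pderiv and multiplication by X
  have hder : ∀ i : ℤ, ∀ q ∈ W, MvPolynomial.pderiv i q ∈ W := by
    intro i q hq
    have := hW (b (OscIdx.a i)) q hq
    rw [ha i] at this
    have h2 : (c • (MvPolynomial.pderiv i).toLinearMap) q =
        c • MvPolynomial.pderiv i q := rfl
    rw [h2] at this
    have := W.smul_mem c⁻¹ this
    rwa [smul_smul, inv_mul_cancel₀ hc, one_smul] at this
  have hmul : ∀ i : ℤ, ∀ q ∈ W, MvPolynomial.X i * q ∈ W := by
    intro i q hq
    have := hW (b (OscIdx.adag i)) q hq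
    rwa [hadag i, LinearMap.mulLeft_apply] at this
  -- there is a nonzero element of W
  obtain ⟨p, hpW, hp0⟩ : ∃ p ∈ W, p ≠ 0 := by
    by_contra h
    push_neg at h
    apply hbot
    ext x
    simp only [Submodule.mem_bot]
    constructor
    · intro hx; exact h x hx
    · intro hx; rw [hx]; exact W.zero_mem
  -- 1 ∈ W, by induction on total degree
  have hone : (1 : MvPolynomial ℤ ℂ) ∈ W := by
    have key : ∀ d : ℕ, ∀ q : MvPolynomial ℤ ℂ, q ∈ W → q ≠ 0 →
        q.totalDegree ≤ d → (1 : MvPolynomial ℤ ℂ) ∈ W := by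
      intro d
      induction d with
      | zero =>
        intro q hqW hq0 hdeg
        have hdeg0 : q.totalDegree = 0 := Nat.le_zero.mp hdeg
        have hqC : q = MvPolynomial.C (MvPolynomial.coeff 0 q) := by
          ext m
          rw [MvPolynomial.coeff_C]
          by_cases hm : m = 0
          · subst hm; simp
          · rw [if_neg (Ne.symm hm)]
            by_contra hcm
            have hmem : m ∈ q.support := MvPolynomial.mem_support_iff.mpr hcm
            have := (MvPolynomial.totalDegree_eq_zero_iff ℤ q).mp hdeg0 m hmem
            exact hm (Finsupp.ext this)
        set a := MvPolynomial.coeff 0 q with ha'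
        have ha0 : a ≠ 0 := by
          intro h0; apply hq0; rw [hqC, h0, map_zero]
        have : a⁻¹ • q ∈ W := W.smul_mem _ hqW
        rwa [hqC, MvPolynomial.smul_eq_C_mul, ← map_mul,
          inv_mul_cancel₀ ha0, MvPolynomial.C_1] at this
      | succ d ih =>
        intro q hqW hq0 hdeg
        by_cases hd : q.totalDegree ≤ d
        · exact ih q hqW hq0 hd
        · -- totalDegree q = d + 1 > 0
          have hdeq : q.totalDegree = d + 1 := le_antisymm hdeg (by omega)
          obtain ⟨s, hs, hssum⟩ := q.support.exists_mem_eq_sup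
            (Finset.nonempty_iff_ne_empty.mpr (MvPolynomial.support_eq_empty.not.mpr hq0))
            (fun m : ℤ →₀ ℕ => m.sum fun _ e => e)
          have hssum' : (s.sum fun _ e => e) = d + 1 := by
            rw [← hdeq, MvPolynomial.totalDegree]; exact hssum.symm
          have hsne : s ≠ 0 := by
            intro h0; rw [h0] at hssum'; simp [Finsupp.sum_zero_index] at hssum'
          obtain ⟨i, hi⟩ : ∃ i, s i ≠ 0 := by
            by_contra h
            push_neg at h
            exact hsne (Finsupp.ext h)
          -- pderiv i q ≠ 0
          have hcoeff : MvPolynomial.coeff (s - Finsupp.single i 1)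
              (MvPolynomial.pderiv i q) ≠ 0 := by
            rw [my_coeff_pderiv]
            have hle : Finsupp.single i 1 ≤ s := by
              rw [Finsupp.single_le_iff]; omega
            rw [tsub_add_cancel_of_le hle]
            apply mul_ne_zero
            · exact Nat.cast_ne_zero.mpr (Nat.succ_ne_zero _)
            · exact MvPolynomial.mem_support_iff.mp hs
          have hne : MvPolynomial.pderiv i q ≠ 0 := by
            intro h0; rw [h0] at hcoeff; simp at hcoeff
          exact ih _ (hder i q hqW) hne (my_pderiv_totalDegree hdeg)
    exact key p.totalDegree p hpW hp0 le_rfl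
  -- conclude W = ⊤
  rw [Submodule.eq_top_iff']
  intro q
  induction q using MvPolynomial.induction_on with
  | C a =>
    have : a • (1 : MvPolynomial ℤ ℂ) ∈ W := W.smul_mem a hone
    rwa [MvPolynomial.smul_eq_C_mul, mul_one] at this
  | add p q hp hq => exact W.add_mem hp hq
  | mul_X p i hp =>
    rw [mul_comm]
    exact hmul i p hp
end

section
/- In the free corner algebra Ĝ(su(2)) := Ĝ_0(su(2)) (case Λ = 0), the linear span of the nine elements {J_{μ00}, K_{μ00}, P_{μ00} : 1 ≤ μ ≤ 3} is a Lie subalgebra, and this subalgebra is isomorphic, as a complex Lie algebra, to the (complexified) isochronous Galilean Lie algebra igal(3). -/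
/-- The Levi-Civita symbol `ε_{abc}` on `Fin 3` (with values in `ℤ`). -/
def eps (a b c : Fin 3) : ℤ :=
  (((b : ℤ) - (a : ℤ)) * ((c : ℤ) - (b : ℤ)) * ((c : ℤ) - (a : ℤ))) / 2

/-- Index type for the basis of the free corner algebra `Ĝ_Λ(su(2))` of 4d su(2) BF theory on
the torus: generators `J_{μ mn}`, `K_{μ mn}`, `P_{μ mn}` (for `μ ∈ {1,2,3}` encoded as `Fin 3`
and `m,n ∈ ℤ`) and the central element `Z`. -/
inductive NAIdx : Type
  | J : Fin 3 → ℤ → ℤ → NAIdx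
  | K : Fin 3 → ℤ → ℤ → NAIdx
  | P : Fin 3 → ℤ → ℤ → NAIdx
  | Z : NAIdx

/-- `IsSu2BFCorner Λ G b` says that the complex Lie algebra `G`, with basis `b` indexed by
`NAIdx`, satisfies the bracket relations of the free corner algebra `Ĝ_Λ(su(2))` of
four-dimensional su(2) BF theory on the torus:
`[J_{μkl}, J_{νmn}] = Σ_λ ε_{μν}^λ J_{λ(k+m)(l+n)}`,
`[J_{μkl}, K_{νmn}] = Σ_λ ε_{μν}^λ K_{λ(k+m)(l+n)} + i m δ_{μ,ν} δ_{k,-m} δ_{l,-n} Z`,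
`[J_{μkl}, P_{νmn}] = Σ_λ ε_{μν}^λ P_{λ(k+m)(l+n)} − i n δ_{μ,ν} δ_{k,-m} δ_{l,-n} Z`,
`[K_{μkl}, P_{νmn}] = Λ δ_{μ,ν} δ_{k,-m} δ_{l,-n} Z`,
all other brackets of basis elements zero (`Z` central). -/
structure IsSu2BFCorner (Λ : ℝ) (G : Type) [LieRing G] [LieAlgebra ℂ G]
    (b : Module.Basis NAIdx ℂ G) : Prop where
  J_J : ∀ (μ ν : Fin 3) (k l m n : ℤ), ⁅b (NAIdx.J μ k l), b (NAIdx.J ν m n)⁆ =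
      ∑ lam : Fin 3, (eps μ ν lam : ℂ) • b (NAIdx.J lam (k + m) (l + n))
  J_K : ∀ (μ ν : Fin 3) (k l m n : ℤ), ⁅b (NAIdx.J μ k l), b (NAIdx.K ν m n)⁆ =
      (∑ lam : Fin 3, (eps μ ν lam : ℂ) • b (NAIdx.K lam (k + m) (l + n))) +
      (if μ = ν ∧ k = -m ∧ l = -n then (Complex.I * (m : ℂ)) • b NAIdx.Z else 0)
  J_P : ∀ (μ ν : Fin 3) (k l m n : ℤ), ⁅b (NAIdx.J μ k l), b (NAIdx.P ν m n)⁆ =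
      (∑ lam : Fin 3, (eps μ ν lam : ℂ) • b (NAIdx.P lam (k + m) (l + n))) -
      (if μ = ν ∧ k = -m ∧ l = -n then (Complex.I * (n : ℂ)) • b NAIdx.Z else 0)
  K_P : ∀ (μ ν : Fin 3) (k l m n : ℤ), ⁅b (NAIdx.K μ k l), b (NAIdx.P ν m n)⁆ =
      if μ = ν ∧ k = -m ∧ l = -n then (Λ : ℂ) • b NAIdx.Z else 0
  K_K : ∀ (μ ν : Fin 3) (k l m n : ℤ), ⁅b (NAIdx.K μ k l), b (NAIdx.K ν m n)⁆ = 0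
  P_P : ∀ (μ ν : Fin 3) (k l m n : ℤ), ⁅b (NAIdx.P μ k l), b (NAIdx.P ν m n)⁆ = 0
  Z_central : ∀ i : NAIdx, ⁅b NAIdx.Z, b i⁆ = 0
/-- Index type for the basis of the isochronous Galilean Lie algebra `igal(3)`. -/
inductive IgalIdx : Type
  | J : Fin 3 → IgalIdx
  | K : Fin 3 → IgalIdx
  | P : Fin 3 → IgalIdx

/-- `IsIgal3 H b` says that the complex Lie algebra `H`, with basis `b` indexed by `IgalIdx`,
satisfies the bracket relations of the (complexified) isochronous Galilean Lie algebra
`igal(3)`: `[J_μ, J_ν] = Σ_λ ε_{μν}^λ J_λ`, `[J_μ, K_ν] = Σ_λ ε_{μν}^λ K_λ`,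
`[J_μ, P_ν] = Σ_λ ε_{μν}^λ P_λ`, all other brackets of basis elements zero. -/
structure IsIgal3 (H : Type) [LieRing H] [LieAlgebra ℂ H]
    (b : Module.Basis IgalIdx ℂ H) : Prop where
  J_J : ∀ μ ν : Fin 3, ⁅b (IgalIdx.J μ), b (IgalIdx.J ν)⁆ =
      ∑ lam : Fin 3, (eps μ ν lam : ℂ) • b (IgalIdx.J lam)
  J_K : ∀ μ ν : Fin 3, ⁅b (IgalIdx.J μ), b (IgalIdx.K ν)⁆ =
      ∑ lam : Fin 3, (eps μ ν lam : ℂ) • b (IgalIdx.K lam)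
  J_P : ∀ μ ν : Fin 3, ⁅b (IgalIdx.J μ), b (IgalIdx.P ν)⁆ =
      ∑ lam : Fin 3, (eps μ ν lam : ℂ) • b (IgalIdx.P lam)
  K_K : ∀ μ ν : Fin 3, ⁅b (IgalIdx.K μ), b (IgalIdx.K ν)⁆ = 0
  P_P : ∀ μ ν : Fin 3, ⁅b (IgalIdx.P μ), b (IgalIdx.P ν)⁆ = 0
  K_P : ∀ μ ν : Fin 3, ⁅b (IgalIdx.K μ), b (IgalIdx.P ν)⁆ = 0

attribute [local instance 100] LieRing.ofAssociativeRing

/-- In the free corner algebra `Ĝ(su(2)) := Ĝ_0(su(2))`, the linear span of the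
nine elements `{J_{μ00}, K_{μ00}, P_{μ00} : 1 ≤ μ ≤ 3}` is a Lie subalgebra isomorphic to the
(complexified) isochronous Galilean Lie algebra `igal(3)`; equivalently, there is an injective
homomorphism of complex Lie algebras from `igal(3)` to `Ĝ(su(2))` whose range is exactly this
span. -/
theorem zeroth_level_subalgebra_iso_igal3
    (G : Type) [LieRing G] [LieAlgebra ℂ G] (b : Module.Basis NAIdx ℂ G)
    (hG : IsSu2BFCorner 0 G b)
    (H : Type) [LieRing H] [LieAlgebra ℂ H] (bH : Module.Basis IgalIdx ℂ H)
    (hH : IsIgal3 H bH) :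
    ∃ φ : H →ₗ⁅ℂ⁆ G, Function.Injective φ ∧
      LinearMap.range φ.toLinearMap = Submodule.span ℂ
        {x : G | ∃ μ : Fin 3,
          x = b (NAIdx.J μ 0 0) ∨ x = b (NAIdx.K μ 0 0) ∨ x = b (NAIdx.P μ 0 0)} := by
  classical
  -- the index map
  set f : IgalIdx → NAIdx := fun i => match i with
    | IgalIdx.J μ => NAIdx.J μ 0 0
    | IgalIdx.K μ => NAIdx.K μ 0 0
    | IgalIdx.P μ => NAIdx.P μ 0 0 with hf
  set φ : H →ₗ[ℂ] G := bH.constr ℂ (fun i => b (f i)) with hφdef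
  have hφ : ∀ i, φ (bH i) = b (f i) := fun i => bH.constr_basis ℂ _ i
  -- the key bracket computation on basis elements
  have key : ∀ i j : IgalIdx, ⁅φ (bH i), φ (bH j)⁆ = φ ⁅bH i, bH j⁆ := by
    have hsum : ∀ (v : Fin 3 → IgalIdx) (c : Fin 3 → ℂ),
        φ (∑ lam : Fin 3, c lam • bH (v lam)) = ∑ lam : Fin 3, c lam • b (f (v lam)) := by
      intro v c
      rw [map_sum]
      exact Finset.sum_congr rfl fun lam _ => by rw [map_smul, hφ]
    intro i j
    cases i with
    | J μ =>
      cases j with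
      | J ν =>
        rw [hφ, hφ, hH.J_J, hG.J_J, hsum (fun lam => IgalIdx.J lam)]
        simp [hf]
      | K ν =>
        rw [hφ, hφ, hH.J_K, hG.J_K, hsum (fun lam => IgalIdx.K lam)]
        simp [hf]
      | P ν =>
        rw [hφ, hφ, hH.J_P, hG.J_P, hsum (fun lam => IgalIdx.P lam)]
        simp [hf]
    | K μ =>
      cases j with
      | J ν =>
        rw [hφ, hφ, ← lie_skew, ← lie_skew (bH (IgalIdx.K μ)), map_neg,
          hH.J_K, hG.J_K, hsum (fun lam => IgalIdx.K lam)]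
        simp [hf]
      | K ν => rw [hφ, hφ, hH.K_K, hG.K_K, map_zero]
      | P ν =>
        rw [hφ, hφ, hH.K_P, hG.K_P, map_zero]
        simp [hf]
    | P μ =>
      cases j with
      | J ν =>
        rw [hφ, hφ, ← lie_skew, ← lie_skew (bH (IgalIdx.P μ)), map_neg,
          hH.J_P, hG.J_P, hsum (fun lam => IgalIdx.P lam)]
        simp [hf]
      | K ν =>
        rw [hφ, hφ, ← lie_skew, ← lie_skew (bH (IgalIdx.P μ)), map_neg,
          hH.K_P, hG.K_P, map_zero]
        simp [hf]
      | P ν => rw [hφ, hφ, hH.P_P, hG.P_P, map_zero]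
  -- bilinear extension of the bracket computation
  have keyall : ∀ x y : H, ⁅φ x, φ y⁆ = φ ⁅x, y⁆ := by
    have hAB : ((LinearMap.llcomp ℂ H H G φ).comp (LieAlgebra.ad ℂ H).toLinearMap
          : H →ₗ[ℂ] H →ₗ[ℂ] G)
        = (LinearMap.lcomp ℂ G φ).comp ((LieAlgebra.ad ℂ G).toLinearMap.comp φ) := by
      refine bH.ext fun i => bH.ext fun j => ?_
      simpa using (key i j).symm
    intro x y
    have := LinearMap.congr_fun (LinearMap.congr_fun hAB x) y
    simpa using this.symm
  refine ⟨⟨φ, fun {x y} => (keyall x y).symm⟩, ?_, ?_⟩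
  · -- injectivity via a left inverse
    set g : NAIdx → H := fun i => match i with
      | NAIdx.J μ m n => if m = 0 ∧ n = 0 then bH (IgalIdx.J μ) else 0
      | NAIdx.K μ m n => if m = 0 ∧ n = 0 then bH (IgalIdx.K μ) else 0
      | NAIdx.P μ m n => if m = 0 ∧ n = 0 then bH (IgalIdx.P μ) else 0
      | NAIdx.Z => 0 with hg
    set ψ : G →ₗ[ℂ] H := b.constr ℂ g with hψdef
    have hleft : ψ.comp φ = LinearMap.id := by
      refine bH.ext fun i => ?_
      have hψ : ∀ i, ψ (b i) = g i := fun i => b.constr_basis ℂ _ i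
      cases i <;> simp [hφ, hψ, hf, hg]
    intro x y hxy
    have : ψ (φ x) = ψ (φ y) := by exact congrArg ψ hxy
    simpa using (LinearMap.congr_fun hleft x).symm.trans
      (this.trans (LinearMap.congr_fun hleft y))
  · -- range
    show LinearMap.range φ = _
    rw [hφdef, bH.constr_range]
    congr 1
    ext x
    constructor
    · rintro ⟨i, rfl⟩
      cases i with
      | J μ => exact ⟨μ, Or.inl rfl⟩
      | K μ => exact ⟨μ, Or.inr (Or.inl rfl)⟩
      | P μ => exact ⟨μ, Or.inr (Or.inr rfl)⟩
    · rintro ⟨μ, rfl | rfl | rfl⟩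
      exacts [⟨IgalIdx.J μ, rfl⟩, ⟨IgalIdx.K μ, rfl⟩, ⟨IgalIdx.P μ, rfl⟩]
end

section
/- Let Λ be a nonzero real number. In the free corner algebra Ĝ_Λ(su(2)), the linear span of the ten elements {J_{μ00}, K_{μ00}, P_{μ00} : 1 ≤ μ ≤ 3} ∪ {Z} is a Lie subalgebra, and this subalgebra is isomorphic, as a complex Lie algebra, to the (complexified) extended isochronous Galilean Lie algebra igal̂(3) with mass parameter m = Λ, via an isomorphism sending J_{μ00} ↦ J_μ, K_{μ00} ↦ K_μ, P_{μ00} ↦ P_μ and Z ↦ I. -/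
/-- Index type for the basis of the extended isochronous Galilean Lie algebra `igal̂(3)`. -/
inductive IgalHatIdx : Type
  | J : Fin 3 → IgalHatIdx
  | K : Fin 3 → IgalHatIdx
  | P : Fin 3 → IgalHatIdx
  | I : IgalHatIdx

/-- `IsIgalHat3 m H b` says that the complex Lie algebra `H`, with basis `b` indexed by
`IgalHatIdx`, satisfies the bracket relations of the (complexified) extended isochronous
Galilean Lie algebra `igal̂(3)` with mass parameter `m`:
`[J_μ, J_ν] = Σ_λ ε_{μν}^λ J_λ`, `[J_μ, K_ν] = Σ_λ ε_{μν}^λ K_λ`,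
`[J_μ, P_ν] = Σ_λ ε_{μν}^λ P_λ`, `[K_μ, P_ν] = δ_{μ,ν} m I`, with `I` central and all other
brackets of basis elements zero. -/
structure IsIgalHat3 (m : ℂ) (H : Type) [LieRing H] [LieAlgebra ℂ H]
    (b : Module.Basis IgalHatIdx ℂ H) : Prop where
  J_J : ∀ μ ν : Fin 3, ⁅b (IgalHatIdx.J μ), b (IgalHatIdx.J ν)⁆ =
      ∑ lam : Fin 3, (eps μ ν lam : ℂ) • b (IgalHatIdx.J lam)
  J_K : ∀ μ ν : Fin 3, ⁅b (IgalHatIdx.J μ), b (IgalHatIdx.K ν)⁆ =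
      ∑ lam : Fin 3, (eps μ ν lam : ℂ) • b (IgalHatIdx.K lam)
  J_P : ∀ μ ν : Fin 3, ⁅b (IgalHatIdx.J μ), b (IgalHatIdx.P ν)⁆ =
      ∑ lam : Fin 3, (eps μ ν lam : ℂ) • b (IgalHatIdx.P lam)
  K_P : ∀ μ ν : Fin 3, ⁅b (IgalHatIdx.K μ), b (IgalHatIdx.P ν)⁆ =
      if μ = ν then m • b IgalHatIdx.I else 0
  K_K : ∀ μ ν : Fin 3, ⁅b (IgalHatIdx.K μ), b (IgalHatIdx.K ν)⁆ = 0
  P_P : ∀ μ ν : Fin 3, ⁅b (IgalHatIdx.P μ), b (IgalHatIdx.P ν)⁆ = 0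
  I_central : ∀ i : IgalHatIdx, ⁅b IgalHatIdx.I, b i⁆ = 0

/-- The index embedding. -/
def fIdx : IgalHatIdx → NAIdx
  | .J μ => .J μ 0 0
  | .K μ => .K μ 0 0
  | .P μ => .P μ 0 0
  | .I => .Z

/-- The retraction on indices (valued in H). -/
noncomputable def gIdx (H : Type) [AddCommGroup H] [Module ℂ H] (bH : Module.Basis IgalHatIdx ℂ H) : NAIdx → H
  | .J μ m n => if m = 0 ∧ n = 0 then bH (.J μ) else 0
  | .K μ m n => if m = 0 ∧ n = 0 then bH (.K μ) else 0
  | .P μ m n => if m = 0 ∧ n = 0 then bH (.P μ) else 0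
  | .Z => bH .I

/-- For `Λ ≠ 0`, in the free corner algebra `Ĝ_Λ(su(2))` the linear span of the
ten elements `{J_{μ00}, K_{μ00}, P_{μ00} : 1 ≤ μ ≤ 3} ∪ {Z}` is a Lie subalgebra isomorphic to the
(complexified) extended isochronous Galilean Lie algebra `igal̂(3)` with mass parameter `m = Λ`,
via an isomorphism sending `J_μ ↦ J_{μ00}`, `K_μ ↦ K_{μ00}`, `P_μ ↦ P_{μ00}` and `I ↦ Z`;
equivalently, there is an injective homomorphism of complex Lie algebras `φ : igal̂(3) → Ĝ_Λ(su(2))`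
with those values on the basis, whose range is exactly this span. -/
theorem zeroth_level_subalgebra_iso_extended_igal3 (Λ : ℝ) (hΛ : Λ ≠ 0)
    (G : Type) [LieRing G] [LieAlgebra ℂ G] (b : Module.Basis NAIdx ℂ G)
    (hG : IsSu2BFCorner Λ G b)
    (H : Type) [LieRing H] [LieAlgebra ℂ H] (bH : Module.Basis IgalHatIdx ℂ H)
    (hH : IsIgalHat3 (Λ : ℂ) H bH) :
    ∃ φ : H →ₗ⁅ℂ⁆ G, Function.Injective φ ∧
      (∀ μ : Fin 3, φ (bH (IgalHatIdx.J μ)) = b (NAIdx.J μ 0 0)) ∧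
      (∀ μ : Fin 3, φ (bH (IgalHatIdx.K μ)) = b (NAIdx.K μ 0 0)) ∧
      (∀ μ : Fin 3, φ (bH (IgalHatIdx.P μ)) = b (NAIdx.P μ 0 0)) ∧
      φ (bH IgalHatIdx.I) = b NAIdx.Z ∧
      LinearMap.range φ.toLinearMap = Submodule.span ℂ
        ({x : G | ∃ μ : Fin 3,
            x = b (NAIdx.J μ 0 0) ∨ x = b (NAIdx.K μ 0 0) ∨ x = b (NAIdx.P μ 0 0)} ∪
          {b NAIdx.Z}) := by
  set φ₀ : H →ₗ[ℂ] G := bH.constr ℂ (fun i => b (fIdx i)) with hφ₀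
  have hbasis : ∀ i, φ₀ (bH i) = b (fIdx i) := fun i => bH.constr_basis ℂ _ i
  have key : ∀ i j, ⁅φ₀ (bH i), φ₀ (bH j)⁆ = φ₀ ⁅bH i, bH j⁆ := by
    intro i j
    rcases i with μ | μ | μ | _ <;> rcases j with ν | ν | ν | _ <;>
      simp only [hbasis, fIdx] <;>
      first
      | (rw [hG.J_J, hH.J_J]; simp [hbasis, fIdx])
      | (rw [hG.J_K, hH.J_K]; simp [hbasis, fIdx])
      | (rw [hG.J_P, hH.J_P]; simp [hbasis, fIdx])
      | (rw [hG.K_P, hH.K_P]; rcases eq_or_ne μ ν with h|h <;> simp [h, hbasis, fIdx])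
      | (rw [hG.K_K, hH.K_K]; simp)
      | (rw [hG.P_P, hH.P_P]; simp)
      | (rw [← lie_skew, hG.J_K, ← lie_skew (bH _), hH.J_K]; simp [hbasis, fIdx])
      | (rw [← lie_skew, hG.J_P, ← lie_skew (bH _), hH.J_P]; simp [hbasis, fIdx])
      | (rw [← lie_skew, hG.K_P, ← lie_skew (bH _), hH.K_P]; rcases eq_or_ne ν μ with h|h <;> simp [h, hbasis, fIdx])
      | (rw [hG.Z_central, hH.I_central]; simp)
      | (rw [← lie_skew, hG.Z_central, ← lie_skew (bH _), hH.I_central]; simp)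
  have map_lie : ∀ x y : H, ⁅φ₀ x, φ₀ y⁆ = φ₀ ⁅x, y⁆ := by
    let B1 : H →ₗ[ℂ] H →ₗ[ℂ] G := LinearMap.mk₂ ℂ (fun x y => ⁅φ₀ x, φ₀ y⁆)
      (fun x x' y => by simp [add_lie]) (fun c x y => by simp)
      (fun x y y' => by simp [lie_add]) (fun c x y => by simp)
    let B2 : H →ₗ[ℂ] H →ₗ[ℂ] G := LinearMap.mk₂ ℂ (fun x y => φ₀ ⁅x, y⁆)
      (fun x x' y => by simp [add_lie]) (fun c x y => by simp)
      (fun x y y' => by simp [lie_add]) (fun c x y => by simp)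
    have : B1 = B2 := bH.ext fun i => bH.ext fun j => key i j
    intro x y
    have := congrFun (congrArg (fun L => fun x y => L x y) this) x
    exact congrFun this y
  refine ⟨{ toLinearMap := φ₀, map_lie' := fun {x y} => (map_lie x y).symm }, ?_, ?_, ?_, ?_, ?_, ?_⟩
  · -- injectivity via retraction
    set ψ : G →ₗ[ℂ] H := b.constr ℂ (gIdx H bH) with hψ
    have hcomp : ψ.comp φ₀ = LinearMap.id := by
      refine bH.ext fun i => ?_
      cases i <;> simp [hbasis, fIdx, hψ, gIdx]
    have h2 : ∀ z, ψ (φ₀ z) = z := fun z => by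
      simpa using LinearMap.congr_fun hcomp z
    intro x y hxy
    have hxy' : φ₀ x = φ₀ y := hxy
    rw [← h2 x, ← h2 y, hxy']
  · intro μ; exact hbasis (.J μ)
  · intro μ; exact hbasis (.K μ)
  · intro μ; exact hbasis (.P μ)
  · exact hbasis .I
  · show LinearMap.range (bH.constr ℂ fun i => b (fIdx i)) = _
    rw [Module.Basis.constr_range]
    congr 1
    ext x
    constructor
    · rintro ⟨i, rfl⟩
      cases i with
      | J μ => exact Or.inl ⟨μ, Or.inl rfl⟩
      | K μ => exact Or.inl ⟨μ, Or.inr (Or.inl rfl)⟩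
      | P μ => exact Or.inl ⟨μ, Or.inr (Or.inr rfl)⟩
      | I => exact Or.inr rfl
    · rintro (⟨μ, rfl | rfl | rfl⟩ | rfl)
      exacts [⟨.J μ, rfl⟩, ⟨.K μ, rfl⟩, ⟨.P μ, rfl⟩, ⟨.I, rfl⟩]
end

section
/- For every Λ ∈ ℝ there is a surjective homomorphism of complex Lie algebras π : Ĝ_Λ(su(2)) → igal(3) ⊗ ℂ[z,z⁻¹,w,w⁻¹], determined by J_{μ mn} ↦ J_μ ⊗ zᵐwⁿ, K_{μ mn} ↦ K_μ ⊗ zᵐwⁿ, P_{μ mn} ↦ P_μ ⊗ zᵐwⁿ, and Z ↦ 0, whose kernel is the one-dimensional subspace ℂ·Z, which is central in Ĝ_Λ(su(2)). In other words, Ĝ_Λ(su(2)) is a one-dimensional central extension of the double-loop algebra igal(3) ⊗ ℂ[z,z⁻¹,w,w⁻¹]. -/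
/-- `IsDoubleLoopIgal3 L b` says that the complex Lie algebra `L`, with basis `b` indexed by
`IgalIdx × ℤ × ℤ` (the element `(X, m, n)` representing `X ⊗ zᵐwⁿ`), satisfies the bracket
relations of the double-loop algebra `igal(3) ⊗ ℂ[z,z⁻¹,w,w⁻¹]`, namely
`[x ⊗ zᵏwˡ, y ⊗ zᵐwⁿ] = [x,y] ⊗ z^{k+m}w^{l+n}`. -/
structure IsDoubleLoopIgal3 (L : Type) [LieRing L] [LieAlgebra ℂ L]
    (b : Module.Basis (IgalIdx × ℤ × ℤ) ℂ L) : Prop where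
  J_J : ∀ (μ ν : Fin 3) (k l m n : ℤ), ⁅b (IgalIdx.J μ, k, l), b (IgalIdx.J ν, m, n)⁆ =
      ∑ lam : Fin 3, (eps μ ν lam : ℂ) • b (IgalIdx.J lam, k + m, l + n)
  J_K : ∀ (μ ν : Fin 3) (k l m n : ℤ), ⁅b (IgalIdx.J μ, k, l), b (IgalIdx.K ν, m, n)⁆ =
      ∑ lam : Fin 3, (eps μ ν lam : ℂ) • b (IgalIdx.K lam, k + m, l + n)
  J_P : ∀ (μ ν : Fin 3) (k l m n : ℤ), ⁅b (IgalIdx.J μ, k, l), b (IgalIdx.P ν, m, n)⁆ =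
      ∑ lam : Fin 3, (eps μ ν lam : ℂ) • b (IgalIdx.P lam, k + m, l + n)
  K_K : ∀ (μ ν : Fin 3) (k l m n : ℤ), ⁅b (IgalIdx.K μ, k, l), b (IgalIdx.K ν, m, n)⁆ = 0
  P_P : ∀ (μ ν : Fin 3) (k l m n : ℤ), ⁅b (IgalIdx.P μ, k, l), b (IgalIdx.P ν, m, n)⁆ = 0
  K_P : ∀ (μ ν : Fin 3) (k l m n : ℤ), ⁅b (IgalIdx.K μ, k, l), b (IgalIdx.P ν, m, n)⁆ = 0

/-- Target of the projection on basis elements. -/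
noncomputable def tgtFun {L : Type} [AddCommGroup L] [Module ℂ L]
    (bL : Module.Basis (IgalIdx × ℤ × ℤ) ℂ L) : NAIdx → L
  | .J μ m n => bL (.J μ, m, n)
  | .K μ m n => bL (.K μ, m, n)
  | .P μ m n => bL (.P μ, m, n)
  | .Z => 0

/-- Embedding of double-loop indices into `NAIdx`. -/
def emb : IgalIdx × ℤ × ℤ → NAIdx
  | (.J μ, m, n) => .J μ m n
  | (.K μ, m, n) => .K μ m n
  | (.P μ, m, n) => .P μ m n

/-- For every `Λ ∈ ℝ` there is a surjective homomorphism of complex Lie algebras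
`π : Ĝ_Λ(su(2)) → igal(3) ⊗ ℂ[z,z⁻¹,w,w⁻¹]`, determined by `J_{μmn} ↦ J_μ ⊗ zᵐwⁿ`,
`K_{μmn} ↦ K_μ ⊗ zᵐwⁿ`, `P_{μmn} ↦ P_μ ⊗ zᵐwⁿ`, `Z ↦ 0`, whose kernel is the one-dimensional
central subspace `ℂ·Z`; i.e. `Ĝ_Λ(su(2))` is a one-dimensional central extension of the
double-loop algebra. -/
theorem corner_algebra_central_extension_of_double_loop (Λ : ℝ)
    (G : Type) [LieRing G] [LieAlgebra ℂ G] (b : Module.Basis NAIdx ℂ G)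
    (hG : IsSu2BFCorner Λ G b)
    (L : Type) [LieRing L] [LieAlgebra ℂ L] (bL : Module.Basis (IgalIdx × ℤ × ℤ) ℂ L)
    (hL : IsDoubleLoopIgal3 L bL) :
    ∃ π : G →ₗ⁅ℂ⁆ L, Function.Surjective π ∧
      (∀ (μ : Fin 3) (m n : ℤ), π (b (NAIdx.J μ m n)) = bL (IgalIdx.J μ, m, n)) ∧
      (∀ (μ : Fin 3) (m n : ℤ), π (b (NAIdx.K μ m n)) = bL (IgalIdx.K μ, m, n)) ∧
      (∀ (μ : Fin 3) (m n : ℤ), π (b (NAIdx.P μ m n)) = bL (IgalIdx.P μ, m, n)) ∧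
      π (b NAIdx.Z) = 0 ∧
      LinearMap.ker π.toLinearMap = Submodule.span ℂ {b NAIdx.Z} ∧
      (∀ x : G, ⁅b NAIdx.Z, x⁆ = 0) := by
  
  classical
  set f : G →ₗ[ℂ] L := b.constr ℂ (tgtFun bL) with hf
  have hfb : ∀ i, f (b i) = tgtFun bL i := fun i => b.constr_basis ℂ (tgtFun bL) i
  have hfZ : f (b NAIdx.Z) = 0 := hfb NAIdx.Z
  -- brackets on basis elements
  have hbasis : ∀ i j, f ⁅b i, b j⁆ = ⁅f (b i), f (b j)⁆ := by
    intro i j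
    cases i with
    | J μ k l =>
      cases j with
      | J ν m n =>
        rw [hG.J_J, hfb, hfb]
        simp [tgtFun, map_sum, map_smul, hfb, hL.J_J]
      | K ν m n =>
        rw [hG.J_K, hfb, hfb]
        simp [tgtFun, map_sum, map_smul, hfb, apply_ite f, map_smul, hfZ, hL.J_K]
      | P ν m n =>
        rw [hG.J_P, hfb, hfb]
        simp [tgtFun, map_sum, map_smul, hfb, apply_ite f, hfZ, hL.J_P]
      | Z =>
        rw [hfb NAIdx.Z]
        have : ⁅b (NAIdx.J μ k l), b NAIdx.Z⁆ = 0 := by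
          rw [← lie_skew, hG.Z_central, neg_zero]
        simp [this, tgtFun]
    | K μ k l =>
      cases j with
      | J ν m n =>
        have h1 : ⁅b (NAIdx.K μ k l), b (NAIdx.J ν m n)⁆ =
            -⁅b (NAIdx.J ν m n), b (NAIdx.K μ k l)⁆ := (lie_skew _ _).symm
        rw [h1, hG.J_K, hfb, hfb]
        have h2 : ⁅tgtFun bL (NAIdx.K μ k l), tgtFun bL (NAIdx.J ν m n)⁆ =
            -⁅tgtFun bL (NAIdx.J ν m n), tgtFun bL (NAIdx.K μ k l)⁆ := (lie_skew _ _).symm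
        rw [h2]
        simp [tgtFun, map_sum, map_smul, hfb, apply_ite f, hfZ, hL.J_K]
      | K ν m n =>
        rw [hG.K_K, hfb, hfb]
        simp [tgtFun, hL.K_K]
      | P ν m n =>
        rw [hG.K_P, hfb, hfb]
        simp [tgtFun, apply_ite f, hfZ, hL.K_P]
      | Z =>
        rw [hfb NAIdx.Z]
        have : ⁅b (NAIdx.K μ k l), b NAIdx.Z⁆ = 0 := by
          rw [← lie_skew, hG.Z_central, neg_zero]
        simp [this, tgtFun]
    | P μ k l =>
      cases j with
      | J ν m n =>
        have h1 : ⁅b (NAIdx.P μ k l), b (NAIdx.J ν m n)⁆ =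
            -⁅b (NAIdx.J ν m n), b (NAIdx.P μ k l)⁆ := (lie_skew _ _).symm
        rw [h1, hG.J_P, hfb, hfb]
        have h2 : ⁅tgtFun bL (NAIdx.P μ k l), tgtFun bL (NAIdx.J ν m n)⁆ =
            -⁅tgtFun bL (NAIdx.J ν m n), tgtFun bL (NAIdx.P μ k l)⁆ := (lie_skew _ _).symm
        rw [h2]
        simp [tgtFun, map_sum, map_smul, hfb, apply_ite f, hfZ, hL.J_P]
      | K ν m n =>
        have h1 : ⁅b (NAIdx.P μ k l), b (NAIdx.K ν m n)⁆ =
            -⁅b (NAIdx.K ν m n), b (NAIdx.P μ k l)⁆ := (lie_skew _ _).symm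
        rw [h1, hG.K_P, hfb, hfb]
        have h2 : ⁅tgtFun bL (NAIdx.P μ k l), tgtFun bL (NAIdx.K ν m n)⁆ =
            -⁅tgtFun bL (NAIdx.K ν m n), tgtFun bL (NAIdx.P μ k l)⁆ := (lie_skew _ _).symm
        rw [h2]
        simp [tgtFun, apply_ite f, hfZ, hL.K_P]
      | P ν m n =>
        rw [hG.P_P, hfb, hfb]
        simp [tgtFun, hL.P_P]
      | Z =>
        rw [hfb NAIdx.Z]
        have : ⁅b (NAIdx.P μ k l), b NAIdx.Z⁆ = 0 := by
          rw [← lie_skew, hG.Z_central, neg_zero]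
        simp [this, tgtFun]
    | Z =>
      rw [hG.Z_central, hfb NAIdx.Z]
      simp [tgtFun]
  -- extend bracket compatibility to all elements by bilinearity
  have key : ∀ x y : G, f ⁅x, y⁆ = ⁅f x, f y⁆ := by
    let B₁ : G →ₗ[ℂ] G →ₗ[ℂ] L := LinearMap.mk₂ ℂ (fun x y => f ⁅x, y⁆)
      (fun x x' y => by simp only [add_lie, map_add])
      (fun c x y => by simp only [smul_lie, map_smul])
      (fun x y y' => by simp only [lie_add, map_add])
      (fun c x y => by simp only [lie_smul, map_smul])
    let B₂ : G →ₗ[ℂ] G →ₗ[ℂ] L := LinearMap.mk₂ ℂ (fun x y => ⁅f x, f y⁆)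
      (fun x x' y => by simp only [map_add, add_lie])
      (fun c x y => by simp only [map_smul, smul_lie])
      (fun x y y' => by simp only [map_add, lie_add])
      (fun c x y => by simp only [map_smul, lie_smul])
    have hB : B₁ = B₂ := b.ext fun i => b.ext fun j => hbasis i j
    intro x y
    exact LinearMap.congr_fun (LinearMap.congr_fun hB x) y
  refine ⟨⟨f, fun {x y} => key x y⟩, ?_, ?_, ?_, ?_, ?_, ?_, ?_⟩
  · -- surjectivity
    show Function.Surjective f
    rw [← LinearMap.range_eq_top (f := f)]
    rw [← top_le_iff, ← bL.span_eq, Submodule.span_le]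
    rintro _ ⟨⟨j, m, n⟩, rfl⟩
    cases j with
    | J μ => exact ⟨b (NAIdx.J μ m n), hfb _⟩
    | K μ => exact ⟨b (NAIdx.K μ m n), hfb _⟩
    | P μ => exact ⟨b (NAIdx.P μ m n), hfb _⟩
  · exact fun μ m n => hfb _
  · exact fun μ m n => hfb _
  · exact fun μ m n => hfb _
  · exact hfZ
  · -- kernel
    set s : L →ₗ[ℂ] G := bL.constr ℂ (fun j => b (emb j)) with hs
    have hsb : ∀ j, s (bL j) = b (emb j) := fun j => bL.constr_basis ℂ _ j
    set q : G →ₗ[ℂ] G := LinearMap.id - s ∘ₗ f with hq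
    have hqle : LinearMap.range q ≤ Submodule.span ℂ {b NAIdx.Z} := by
      rw [LinearMap.range_eq_map, ← b.span_eq, Submodule.map_span, Submodule.span_le]
      rintro _ ⟨_, ⟨i, rfl⟩, rfl⟩
      cases i with
      | J μ m n =>
        have : q (b (NAIdx.J μ m n)) = 0 := by
          simp [hq, hfb, tgtFun, hsb, emb]
        rw [this]; exact Submodule.zero_mem _
      | K μ m n =>
        have : q (b (NAIdx.K μ m n)) = 0 := by
          simp [hq, hfb, tgtFun, hsb, emb]
        rw [this]; exact Submodule.zero_mem _
      | P μ m n =>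
        have : q (b (NAIdx.P μ m n)) = 0 := by
          simp [hq, hfb, tgtFun, hsb, emb]
        rw [this]; exact Submodule.zero_mem _
      | Z =>
        have : q (b NAIdx.Z) = b NAIdx.Z := by
          simp [hq, hfZ]
        rw [this]; exact Submodule.mem_span_singleton_self _
    apply le_antisymm
    · intro x hx
      have hx0 : f x = 0 := hx
      have : q x ∈ Submodule.span ℂ {b NAIdx.Z} := hqle ⟨x, rfl⟩
      simpa [hq, hx0] using this
    · rw [Submodule.span_le, Set.singleton_subset_iff]
      exact hfZ
  · -- Z central
    intro x
    have : LieAlgebra.ad ℂ G (b NAIdx.Z) = 0 := b.ext fun i => by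
      simpa using hG.Z_central i
    simpa using congrArg (fun m => (m : G →ₗ[ℂ] G) x) this
end

section
/- Let m ∈ ℂ, let igal̂(3) be the (complexified) extended isochronous Galilean Lie algebra with parameter m, and let A := U(igal̂(3)) / ⟨ι(I) − 1⟩ be the quotient of its universal enveloping algebra by the two-sided ideal generated by ι(I) − 1, where ι denotes the canonical map of the Lie algebra into its universal enveloping algebra. Denote by J_μ, K_μ, P_μ also the images of the generators in A, and define f̂_λ := m J_λ + Σ_{μ,ν} ε_{μν}^λ P_μ K_ν ∈ A for λ = 1,2,3. Then for all 1 ≤ μ,ν ≤ 3 the following commutator identities hold in A (with [a,b] := ab − ba): [f̂_μ, J_ν] = Σ_λ ε_{μν}^λ f̂_λ, [f̂_μ, K_ν] = 0, and [f̂_μ, P_ν] = 0. -/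
section QuotientAlgebra

variable {H : Type} [LieRing H] [LieAlgebra ℂ H]

/-- The relation on `U(igal̂(3))` identifying `ι(I)` with `1`; quotienting by (the ring congruence
generated by) it realises `A := U(igal̂(3)) / ⟨ι(I) − 1⟩`. -/
def relI (b : Module.Basis IgalHatIdx ℂ H) :
    UniversalEnvelopingAlgebra ℂ H → UniversalEnvelopingAlgebra ℂ H → Prop :=
  fun x y => x = UniversalEnvelopingAlgebra.ι ℂ (b IgalHatIdx.I) ∧ y = 1

/-- The quotient algebra `A := U(igal̂(3)) / ⟨ι(I) − 1⟩`. -/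
abbrev Aq (b : Module.Basis IgalHatIdx ℂ H) : Type := RingQuot (relI b)

/-- The image in `A` of a generator of `igal̂(3)`. -/
noncomputable def gen (b : Module.Basis IgalHatIdx ℂ H) (i : IgalHatIdx) : Aq b :=
  RingQuot.mkAlgHom ℂ (relI b) (UniversalEnvelopingAlgebra.ι ℂ (b i))

/-- The quantised constraint `f̂_λ := m J_λ + Σ_{μ,ν} ε_{μν}^λ P_μ K_ν ∈ A`. -/
noncomputable def fhat (m : ℂ) (b : Module.Basis IgalHatIdx ℂ H) (lam : Fin 3) : Aq b :=
  m • gen b (IgalHatIdx.J lam) +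
    ∑ μ : Fin 3, ∑ ν : Fin 3, (eps μ ν lam : ℂ) • (gen b (IgalHatIdx.P μ) * gen b (IgalHatIdx.K ν))

end QuotientAlgebra

section Aux
attribute [local instance 100] LieRing.ofAssociativeRing

variable {H : Type} [LieRing H] [LieAlgebra ℂ H]

noncomputable def rho (b : Module.Basis IgalHatIdx ℂ H) : H →ₗ[ℂ] Aq b :=
  (RingQuot.mkAlgHom ℂ (relI b)).toLinearMap ∘ₗ (UniversalEnvelopingAlgebra.ι ℂ).toLinearMap

lemma rho_basis (b : Module.Basis IgalHatIdx ℂ H) (i : IgalHatIdx) : rho b (b i) = gen b i := rfl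

lemma genI (b : Module.Basis IgalHatIdx ℂ H) : gen b IgalHatIdx.I = 1 := by
  have h : relI b (UniversalEnvelopingAlgebra.ι ℂ (b IgalHatIdx.I)) 1 := ⟨rfl, rfl⟩
  have := RingQuot.mkAlgHom_rel ℂ h
  simpa [gen] using this

lemma comm_gen (b : Module.Basis IgalHatIdx ℂ H) (i j : IgalHatIdx) :
    gen b i * gen b j - gen b j * gen b i = rho b ⁅b i, b j⁆ := by
  have h : (UniversalEnvelopingAlgebra.ι ℂ) ⁅b i, b j⁆ =
      UniversalEnvelopingAlgebra.ι ℂ (b i) * UniversalEnvelopingAlgebra.ι ℂ (b j)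
      - UniversalEnvelopingAlgebra.ι ℂ (b j) * UniversalEnvelopingAlgebra.ι ℂ (b i) := by
    rw [LieHom.map_lie, Ring.lie_def]
  simp only [rho, gen, LinearMap.comp_apply, LieHom.coe_toLinearMap, AlgHom.toLinearMap_apply, h,
    map_sub, map_mul]

section Specific
open IgalHatIdx
variable (m : ℂ) (b : Module.Basis IgalHatIdx ℂ H) (hH : IsIgalHat3 m H b)
include hH

lemma cJJ (μ ν : Fin 3) : gen b (J μ) * gen b (J ν) - gen b (J ν) * gen b (J μ)
    = ∑ lam : Fin 3, (eps μ ν lam : ℂ) • gen b (J lam) := by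
  rw [comm_gen, hH.J_J]; simp [map_sum, map_smul, rho_basis]

lemma cJK (μ ν : Fin 3) : gen b (J μ) * gen b (K ν) - gen b (K ν) * gen b (J μ)
    = ∑ lam : Fin 3, (eps μ ν lam : ℂ) • gen b (K lam) := by
  rw [comm_gen, hH.J_K]; simp [map_sum, map_smul, rho_basis]

lemma cJP (μ ν : Fin 3) : gen b (J μ) * gen b (P ν) - gen b (P ν) * gen b (J μ)
    = ∑ lam : Fin 3, (eps μ ν lam : ℂ) • gen b (P lam) := by
  rw [comm_gen, hH.J_P]; simp [map_sum, map_smul, rho_basis]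

lemma cKP (μ ν : Fin 3) : gen b (K μ) * gen b (P ν) - gen b (P ν) * gen b (K μ)
    = if μ = ν then m • (1 : Aq b) else 0 := by
  rw [comm_gen, hH.K_P]
  split <;> simp [map_smul, rho_basis, genI]

lemma cKK (μ ν : Fin 3) : gen b (K μ) * gen b (K ν) - gen b (K ν) * gen b (K μ) = 0 := by
  rw [comm_gen, hH.K_K]; simp

lemma cPP (μ ν : Fin 3) : gen b (P μ) * gen b (P ν) - gen b (P ν) * gen b (P μ) = 0 := by
  rw [comm_gen, hH.P_P]; simp

lemma cKJ (μ ν : Fin 3) : gen b (K μ) * gen b (J ν) - gen b (J ν) * gen b (K μ)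
    = -∑ lam : Fin 3, (eps ν μ lam : ℂ) • gen b (K lam) := by
  rw [← cJK m b hH ν μ]; abel

lemma cPJ (μ ν : Fin 3) : gen b (P μ) * gen b (J ν) - gen b (J ν) * gen b (P μ)
    = -∑ lam : Fin 3, (eps ν μ lam : ℂ) • gen b (P lam) := by
  rw [← cJP m b hH ν μ]; abel

lemma cPK (μ ν : Fin 3) : gen b (P μ) * gen b (K ν) - gen b (K ν) * gen b (P μ)
    = -(if ν = μ then m • (1 : Aq b) else 0) := by
  rw [← cKP m b hH ν μ]; abel

lemma expand_comm (x : Aq b) (μ : Fin 3) :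
    fhat m b μ * x - x * fhat m b μ =
      m • (gen b (J μ) * x - x * gen b (J μ)) +
        ∑ α : Fin 3, ∑ β : Fin 3, (eps α β μ : ℂ) •
          (gen b (P α) * (gen b (K β) * x - x * gen b (K β)) +
            (gen b (P α) * x - x * gen b (P α)) * gen b (K β)) := by
  simp only [fhat, add_mul, mul_add, Finset.sum_mul, Finset.mul_sum, smul_mul_assoc,
    mul_smul_comm, mul_sub, sub_mul, smul_sub, smul_add, mul_assoc]
  rw [add_sub_add_comm, ← smul_sub, ← Finset.sum_sub_distrib]
  congr 1
  refine Finset.sum_congr rfl fun α _ => ?_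
  rw [← Finset.sum_sub_distrib]
  refine Finset.sum_congr rfl fun β _ => ?_
  module
end Specific

lemma eps_000 : eps 0 0 0 = 0 := by decide
lemma eps_001 : eps 0 0 1 = 0 := by decide
lemma eps_002 : eps 0 0 2 = 0 := by decide
lemma eps_010 : eps 0 1 0 = 0 := by decide
lemma eps_011 : eps 0 1 1 = 0 := by decide
lemma eps_012 : eps 0 1 2 = 1 := by decide
lemma eps_020 : eps 0 2 0 = 0 := by decide
lemma eps_021 : eps 0 2 1 = -1 := by decide
lemma eps_022 : eps 0 2 2 = 0 := by decide
lemma eps_100 : eps 1 0 0 = 0 := by decide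
lemma eps_101 : eps 1 0 1 = 0 := by decide
lemma eps_102 : eps 1 0 2 = -1 := by decide
lemma eps_110 : eps 1 1 0 = 0 := by decide
lemma eps_111 : eps 1 1 1 = 0 := by decide
lemma eps_112 : eps 1 1 2 = 0 := by decide
lemma eps_120 : eps 1 2 0 = 1 := by decide
lemma eps_121 : eps 1 2 1 = 0 := by decide
lemma eps_122 : eps 1 2 2 = 0 := by decide
lemma eps_200 : eps 2 0 0 = 0 := by decide
lemma eps_201 : eps 2 0 1 = 1 := by decide
lemma eps_202 : eps 2 0 2 = 0 := by decide
lemma eps_210 : eps 2 1 0 = -1 := by decide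
lemma eps_211 : eps 2 1 1 = 0 := by decide
lemma eps_212 : eps 2 1 2 = 0 := by decide
lemma eps_220 : eps 2 2 0 = 0 := by decide
lemma eps_221 : eps 2 2 1 = 0 := by decide
lemma eps_222 : eps 2 2 2 = 0 := by decide

lemma epsC {a b c : Fin 3} {z : ℤ} (h : eps a b c = z) : ((eps a b c : ℤ) : ℂ) = (z : ℤ) := by rw [h]

end Aux

set_option maxHeartbeats 2000000
set_option linter.unusedSectionVars false

/-- Let `m ∈ ℂ` and let `A := U(igal̂(3)) / ⟨ι(I) − 1⟩`.  With `J_μ, K_μ, P_μ`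
denoting the images of the generators in `A` and `f̂_λ := m J_λ + Σ_{μ,ν} ε_{μν}^λ P_μ K_ν`,
the commutator identities `[f̂_μ, J_ν] = Σ_λ ε_{μν}^λ f̂_λ`, `[f̂_μ, K_ν] = 0`, `[f̂_μ, P_ν] = 0`
hold in `A` for all `1 ≤ μ,ν ≤ 3` (with `[a,b] := ab − ba`). -/
theorem quantized_constraints_bracket_relations (m : ℂ)
    (H : Type) [LieRing H] [LieAlgebra ℂ H] (b : Module.Basis IgalHatIdx ℂ H)
    (hH : IsIgalHat3 m H b) :
    ∀ μ ν : Fin 3,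
      (fhat m b μ * gen b (IgalHatIdx.J ν) - gen b (IgalHatIdx.J ν) * fhat m b μ =
        ∑ lam : Fin 3, (eps μ ν lam : ℂ) • fhat m b lam) ∧
      (fhat m b μ * gen b (IgalHatIdx.K ν) - gen b (IgalHatIdx.K ν) * fhat m b μ = 0) ∧
      (fhat m b μ * gen b (IgalHatIdx.P ν) - gen b (IgalHatIdx.P ν) * fhat m b μ = 0) := by
  intro μ ν
  have tri : ∀ p : Fin 3, p = 0 ∨ p = 1 ∨ p = 2 := by decide
  refine ⟨?_, ?_, ?_⟩
  · rw [expand_comm m b hH]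
    simp only [cJJ m b hH, cKJ m b hH, cPJ m b hH, fhat]
    rcases tri μ with rfl | rfl | rfl <;> rcases tri ν with rfl | rfl | rfl <;>
    · simp only [Fin.sum_univ_three, Fin.isValue, eps_000, eps_001, eps_002, eps_010, eps_011,
        eps_012, eps_020, eps_021, eps_022, eps_100, eps_101, eps_102, eps_110, eps_111, eps_112,
        eps_120, eps_121, eps_122, eps_200, eps_201, eps_202, eps_210, eps_211, eps_212, eps_220,
        eps_221, eps_222, Int.cast_zero, Int.cast_one, Int.cast_neg, zero_smul, one_smul, neg_smul,
        add_zero, zero_add, smul_zero, mul_zero, zero_mul, smul_add, smul_neg, smul_smul,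
        mul_smul_comm, smul_mul_assoc, mul_one, mul_neg, neg_neg, neg_zero, sub_zero, zero_sub,
        neg_add_rev, neg_mul]
      try module
  · rw [expand_comm m b hH]
    simp only [cJK m b hH, cKK m b hH, cPK m b hH]
    rcases tri μ with rfl | rfl | rfl <;> rcases tri ν with rfl | rfl | rfl <;>
    · simp only [Fin.sum_univ_three, Fin.isValue, Fin.reduceEq, reduceIte, eps_000, eps_001,
        eps_002, eps_010, eps_011, eps_012, eps_020, eps_021, eps_022, eps_100, eps_101, eps_102,
        eps_110, eps_111, eps_112, eps_120, eps_121, eps_122, eps_200, eps_201, eps_202, eps_210,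
        eps_211, eps_212, eps_220, eps_221, eps_222, Int.cast_zero, Int.cast_one, Int.cast_neg,
        zero_smul, one_smul, neg_smul, add_zero, zero_add, smul_zero, mul_zero, zero_mul, smul_add,
        smul_neg, smul_smul, mul_smul_comm, smul_mul_assoc, mul_one, one_mul, mul_neg, neg_neg,
        neg_zero, sub_zero, zero_sub, neg_add_rev, neg_mul, ite_mul, mul_ite]
      try module
  · rw [expand_comm m b hH]
    simp only [cJP m b hH, cKP m b hH, cPP m b hH]
    rcases tri μ with rfl | rfl | rfl <;> rcases tri ν with rfl | rfl | rfl <;>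
    · simp only [Fin.sum_univ_three, Fin.isValue, Fin.reduceEq, reduceIte, eps_000, eps_001,
        eps_002, eps_010, eps_011, eps_012, eps_020, eps_021, eps_022, eps_100, eps_101, eps_102,
        eps_110, eps_111, eps_112, eps_120, eps_121, eps_122, eps_200, eps_201, eps_202, eps_210,
        eps_211, eps_212, eps_220, eps_221, eps_222, Int.cast_zero, Int.cast_one, Int.cast_neg,
        zero_smul, one_smul, neg_smul, add_zero, zero_add, smul_zero, mul_zero, zero_mul, smul_add,
        smul_neg, smul_smul, mul_smul_comm, smul_mul_assoc, mul_one, one_mul, mul_neg, neg_neg,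
        neg_zero, sub_zero, zero_sub, neg_add_rev, neg_mul, ite_mul, mul_ite]
      try module
end
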